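/- Let n ≥ 1 be a natural number, 1 < p < q, and 0 < ω < ω_{p,q}. Then there exists B > 0 such that Σ(u) < 0 for u ∈ (0,B), and either Σ(u) > 0 for all u ∈ (B,∞), or there exists C > B such that Σ(u) > 0 for u ∈ (B,C) and Σ(u) < 0 for u ∈ (C,∞). -/

import Mathlib

/-- `σ = n/(p+1) - (n-2)/2`. -/
noncomputable def sigma (n : ℕ) (p : ℝ) : ℝ := n / (p + 1) - ((n : ℝ) - 2) / 2

/-- `τ = n/(q+1) - (n-2)/2`. -/
noncomputable def tau (n : ℕ) (q : ℝ) : ℝ := n / (q + 1) - ((n : ℝ) - 2) / 2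

/-- The Pohozaev polynomial `Σ(u) = -2ω u² + 2σ u^{p+1} - 2τ u^{q+1}`. -/
noncomputable def Sig (n : ℕ) (ω p q u : ℝ) : ℝ :=
  -2 * ω * u ^ 2 + 2 * sigma n p * u ^ (p + 1) - 2 * tau n q * u ^ (q + 1)

/-- The critical frequency `ω_{p,q}`. -/
noncomputable def omegaPQ (p q : ℝ) : ℝ :=
  (2 * (q - p) / ((p + 1) * (q - 1))) *
    (((p - 1) * (q + 1)) / ((p + 1) * (q - 1))) ^ ((p - 1) / (q - p))

/-!
Substituting `v = u^{p-1}` and `r = (q-1)/(p-1) > 1` gives `Σ(u) = u² H(v)` with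
`H(v) = -2ω + 2σv - 2τv^r` (`reducedSig` below), so only the sign pattern of `H` on `(0,∞)`
matters; note `H(0) = -2ω < 0` and `σ - τ = n(q-p)/((p+1)(q+1)) > 0`.

If `τ ≤ 0`, `H` is convex and eventually positive, so once it is nonnegative it stays
positive: one sign change. If `τ > 0`, `H` is strictly concave and tends to `-∞`, so its
nonnegativity set is an interval on whose interior `H > 0`. That interval is nonempty because,
writing `σ = 2s/(p+1)` and `τ = 2t/(q+1)`, the maximum of `σv - τv^r` equals
`ω_{p,q} · s (s/t)^{1/(r-1)}`, and `s (s/t)^{1/(r-1)} ≥ 1` is Bernoulli's inequality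
`t = 1 + r(s-1) ≤ s^r`.
-/

open Set Filter Topology Real

def posNonnegSet (f : ℝ → ℝ) : Set ℝ := {v | 0 < v ∧ 0 ≤ f v}

section SignPattern

variable {f : ℝ → ℝ} {v : ℝ}

lemma neg_of_lt_sInf_posNonnegSet (hv : 0 < v) (hvS : v < sInf (posNonnegSet f)) : f v < 0 := by
  by_contra! h
  exact hvS.not_ge (csInf_le ⟨0, fun _ hx => hx.1.le⟩ ⟨hv, h⟩)

lemma neg_of_sSup_posNonnegSet_lt (hbdd : BddAbove (posNonnegSet f)) (hv : 0 < v)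
    (hvS : sSup (posNonnegSet f) < v) : f v < 0 := by
  by_contra! h
  exact hvS.not_ge (le_csSup hbdd ⟨hv, h⟩)

lemma sInf_posNonnegSet_pos (hf : ContinuousWithinAt f (Ici 0) 0) (h0 : f 0 < 0)
    (hS : (posNonnegSet f).Nonempty) : 0 < sInf (posNonnegSet f) := by
  obtain ⟨δ, hδ, hneg⟩ := mem_nhdsGE_iff_exists_Ico_subset.1 (hf.eventually_lt_const h0)
  refine lt_of_lt_of_le hδ (le_csInf hS fun x hx => ?_)
  by_contra! hxδ
  exact (hneg ⟨hx.1.le, hxδ⟩ : f x < 0).not_ge hx.2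

lemma ConvexOn.pos_of_nonneg_of_lt (hf : ConvexOn ℝ (Ici 0) f) (h0 : f 0 < 0) {x : ℝ}
    (hx : 0 < x) (hxv : x < v) (hfx : 0 ≤ f x) : 0 < f v := by
  have hslope := hf.slope_mono_adjacent self_mem_Ici (hx.trans hxv).le hx hxv
  have hpos : 0 < (f x - f 0) / (x - 0) := div_pos (by linarith) (by linarith)
  have := (div_pos_iff_of_pos_right (sub_pos.2 hxv)).1 (hpos.trans_le hslope)
  linarith

theorem ConvexOn.exists_neg_then_pos (hf : ConvexOn ℝ (Ici 0) f)
    (hf0 : ContinuousWithinAt f (Ici 0) 0) (h0 : f 0 < 0) {w : ℝ} (hw : 0 < w) (hfw : 0 ≤ f w) :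
    ∃ b, 0 < b ∧ (∀ v, 0 < v → v < b → f v < 0) ∧ ∀ v, b < v → 0 < f v := by
  have hS : (posNonnegSet f).Nonempty := ⟨w, hw, hfw⟩
  refine ⟨_, sInf_posNonnegSet_pos hf0 h0 hS, fun v hv => neg_of_lt_sInf_posNonnegSet hv,
    fun v hv => ?_⟩
  obtain ⟨x, ⟨hx, hfx⟩, hxv⟩ := exists_lt_of_csInf_lt hS hv
  exact hf.pos_of_nonneg_of_lt h0 hx hxv hfx

theorem StrictConcaveOn.exists_neg_then_pos_then_neg (hf : StrictConcaveOn ℝ (Ici 0) f)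
    (hf0 : ContinuousWithinAt f (Ici 0) 0) (h0 : f 0 < 0) {w : ℝ} (hw : 0 < w) (hfw : 0 < f w)
    (htop : ∀ᶠ v in atTop, f v < 0) :
    ∃ b c, 0 < b ∧ b < c ∧ (∀ v, 0 < v → v < b → f v < 0) ∧
      (∀ v, b < v → v < c → 0 < f v) ∧ ∀ v, c < v → f v < 0 := by
  have hbdd : BddAbove (posNonnegSet f) := by
    obtain ⟨R, hR⟩ := eventually_atTop.1 htop
    exact ⟨R, fun x hx => not_lt.1 fun hRx => (hR x hRx.le).not_ge hx.2⟩
  have hnear : ∀ᶠ v in 𝓝 w, v ∈ posNonnegSet f := by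
    have hcont := (hf.concaveOn.continuousOn_Ici hf0).continuousAt (Ici_mem_nhds hw)
    filter_upwards [Ioi_mem_nhds hw, hcont.eventually (lt_mem_nhds hfw)] with v hv hfv
    exact ⟨hv, hfv.le⟩
  obtain ⟨x, hxS, hxw⟩ := ((hnear.filter_mono nhdsWithin_le_nhds).and
    (self_mem_nhdsWithin : ∀ᶠ v in 𝓝[<] w, v < w)).exists
  obtain ⟨y, hyS, hwy⟩ := ((hnear.filter_mono nhdsWithin_le_nhds).and
    (self_mem_nhdsWithin : ∀ᶠ v in 𝓝[>] w, w < v)).exists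
  have hS : (posNonnegSet f).Nonempty := ⟨x, hxS⟩
  have hb := sInf_posNonnegSet_pos hf0 h0 hS
  have hbc : sInf (posNonnegSet f) < sSup (posNonnegSet f) :=
    (csInf_le ⟨0, fun _ h => h.1.le⟩ hxS).trans_lt
      ((hxw.trans hwy).trans_le (le_csSup hbdd hyS))
  refine ⟨_, _, hb, hbc, fun v hv => neg_of_lt_sInf_posNonnegSet hv, fun v hbv hvc => ?_,
    fun v hcv => neg_of_sSup_posNonnegSet_lt hbdd (hb.trans (hbc.trans hcv)) hcv⟩
  obtain ⟨x, ⟨hx, hfx⟩, hxv⟩ := exists_lt_of_csInf_lt hS hbv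
  obtain ⟨y, ⟨hy, hfy⟩, hvy⟩ := exists_lt_of_lt_csSup hS hvc
  have := hf.lt_on_openSegment (mem_Ici.2 hx.le) (mem_Ici.2 hy.le) (hxv.trans hvy).ne
    (by rw [openSegment_eq_Ioo (hxv.trans hvy)]; exact ⟨hxv, hvy⟩)
  exact (le_min hfx hfy).trans_lt this

end SignPattern

noncomputable def reducedSig (n : ℕ) (ω p q v : ℝ) : ℝ :=
  -2 * ω + 2 * sigma n p * v - 2 * tau n q * v ^ ((q - 1) / (p - 1))

section Reduced

variable {n : ℕ} {ω p q : ℝ}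

lemma Sig_eq_mul_reducedSig (hp : 1 < p) {u : ℝ} (hu : 0 < u) :
    Sig n ω p q u = u ^ 2 * reducedSig n ω p q (u ^ (p - 1)) := by
  have hp1 : p - 1 ≠ 0 := by linarith
  have e1 : u ^ (p + 1) = u ^ 2 * u ^ (p - 1) := by
    rw [← rpow_natCast u 2, ← rpow_add hu]; congr 1; push_cast; ring
  have e2 : u ^ (q + 1) = u ^ 2 * (u ^ (p - 1)) ^ ((q - 1) / (p - 1)) := by
    rw [← rpow_mul hu.le, mul_div_cancel₀ _ hp1, ← rpow_natCast u 2, ← rpow_add hu]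
    congr 1; push_cast; ring
  rw [Sig, reducedSig, e1, e2]; ring

lemma Sig_neg_of_reducedSig_neg (hp : 1 < p) {u : ℝ} (hu : 0 < u)
    (h : reducedSig n ω p q (u ^ (p - 1)) < 0) : Sig n ω p q u < 0 := by
  rw [Sig_eq_mul_reducedSig hp hu]; exact mul_neg_of_pos_of_neg (by positivity) h

lemma Sig_pos_of_reducedSig_pos (hp : 1 < p) {u : ℝ} (hu : 0 < u)
    (h : 0 < reducedSig n ω p q (u ^ (p - 1))) : 0 < Sig n ω p q u := by
  rw [Sig_eq_mul_reducedSig hp hu]; positivity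

lemma reducedSig_zero (hp : 1 < p) (hpq : p < q) : reducedSig n ω p q 0 = -2 * ω := by
  have : (q - 1) / (p - 1) ≠ 0 := (div_pos (by linarith) (by linarith)).ne'
  simp [reducedSig, zero_rpow this]

lemma continuous_reducedSig (hp : 1 < p) (hpq : p < q) : Continuous (reducedSig n ω p q) := by
  have := continuous_rpow_const (div_pos (by linarith : 0 < q - 1) (by linarith : 0 < p - 1)).le
  unfold reducedSig; fun_prop

lemma tau_lt_sigma (hn : 1 ≤ n) (hp : -1 < p) (hpq : p < q) : tau n q < sigma n p := by
  have hdiff : sigma n p - tau n q = n * (q - p) / ((p + 1) * (q + 1)) := by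
    have : p + 1 ≠ 0 := by linarith
    have : q + 1 ≠ 0 := by linarith
    unfold sigma tau; field_simp; ring
  have : (1 : ℝ) ≤ n := by exact_mod_cast hn
  have : 0 < n * (q - p) / ((p + 1) * (q + 1)) :=
    div_pos (mul_pos (by linarith) (by linarith)) (mul_pos (by linarith) (by linarith))
  linarith

lemma convexOn_reducedSig (hp : 1 < p) (hpq : p < q) (hτ : tau n q ≤ 0) :
    ConvexOn ℝ (Ici 0) (reducedSig n ω p q) := by
  have hr : 1 ≤ (q - 1) / (p - 1) := (one_le_div (by linarith)).2 (by linarith)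
  refine ⟨convex_Ici 0, fun x hx y hy a b ha hb hab => ?_⟩
  have h := (convexOn_rpow hr).2 hx hy ha hb hab
  simp only [smul_eq_mul, reducedSig] at h ⊢
  linear_combination (2 * ω) * hab + mul_le_mul_of_nonneg_left h (by linarith : 0 ≤ -2 * tau n q)

lemma strictConcaveOn_reducedSig (hp : 1 < p) (hpq : p < q) (hτ : 0 < tau n q) :
    StrictConcaveOn ℝ (Ici 0) (reducedSig n ω p q) := by
  have hr : 1 < (q - 1) / (p - 1) := (one_lt_div (by linarith)).2 (by linarith)
  refine ⟨convex_Ici 0, fun x hx y hy hxy a b ha hb hab => ?_⟩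
  have h := (strictConvexOn_rpow hr).2 hx hy hxy ha hb hab
  simp only [smul_eq_mul, reducedSig] at h ⊢
  linear_combination (-2 * ω) * hab + mul_lt_mul_of_pos_left h (by linarith : 0 < 2 * tau n q)

lemma exists_reducedSig_pos_of_tau_nonpos (hn : 1 ≤ n) (hp : 1 < p) (hpq : p < q)
    (hω : 0 ≤ ω) (hτ : tau n q ≤ 0) : ∃ w, 0 < w ∧ 0 < reducedSig n ω p q w := by
  have hd : 0 < sigma n p - tau n q := sub_pos.2 (tau_lt_sigma hn (by linarith) hpq)
  set w := 1 + ω / (sigma n p - tau n q)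
  have hw : 1 ≤ w := le_add_of_nonneg_right (by positivity)
  have hwr : w ≤ w ^ ((q - 1) / (p - 1)) :=
    self_le_rpow_of_one_le hw ((one_le_div (by linarith)).2 (by linarith))
  have hdw : (sigma n p - tau n q) * w = sigma n p - tau n q + ω := by
    simp only [w]; field_simp
  refine ⟨w, by linarith, ?_⟩
  unfold reducedSig
  nlinarith [mul_le_mul_of_nonpos_left hwr hτ]

lemma eventually_reducedSig_neg (hp : 1 < p) (hpq : p < q) (hω : 0 < ω) (hτ : 0 < tau n q) :
    ∀ᶠ v in atTop, reducedSig n ω p q v < 0 := by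
  have hr : 0 < (q - 1) / (p - 1) - 1 := by
    rw [sub_pos]; exact (one_lt_div (by linarith)).2 (by linarith)
  filter_upwards [eventually_gt_atTop 0,
    (tendsto_rpow_atTop hr).eventually_ge_atTop (sigma n p / tau n q)] with v hv hvr
  have hsplit : v ^ ((q - 1) / (p - 1)) = v * v ^ ((q - 1) / (p - 1) - 1) := by
    rw [rpow_sub_one hv.ne']; field_simp
  rw [div_le_iff₀ hτ] at hvr
  unfold reducedSig
  rw [hsplit]
  nlinarith [mul_le_mul_of_nonneg_left hvr hv.le]

lemma mul_sub_mul_rpow_at_critical {a b r : ℝ} (ha : 0 < a) (hb : 0 < b) (hr : 1 < r) :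
    a * (a / (b * r)) ^ (r - 1)⁻¹ - b * ((a / (b * r)) ^ (r - 1)⁻¹) ^ r =
      (1 - r⁻¹) * a * (a / (b * r)) ^ (r - 1)⁻¹ := by
  have hA : 0 < a / (b * r) := by positivity
  have hr1 : r - 1 ≠ 0 := by linarith
  rw [← rpow_mul hA.le, show (r - 1)⁻¹ * r = (r - 1)⁻¹ + 1 by field_simp; ring,
    rpow_add_one hA.ne']
  field_simp

lemma one_le_mul_div_rpow {s t r : ℝ} (hs : 0 < s) (ht : 0 < t) (hr : 1 < r) (hts : t ≤ s ^ r) :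
    1 ≤ s * (s / t) ^ (r - 1)⁻¹ := by
  have hr1 : r - 1 ≠ 0 := by linarith
  calc 1 = s * (s ^ (1 - r)) ^ (r - 1)⁻¹ := by
        rw [← rpow_mul hs.le, show (1 - r) * (r - 1)⁻¹ = -1 by field_simp; ring, rpow_neg_one,
          mul_inv_cancel₀ hs.ne']
    _ ≤ s * (s / t) ^ (r - 1)⁻¹ := by
        rw [rpow_sub hs, rpow_one]
        have : 0 < (r - 1)⁻¹ := inv_pos.2 (by linarith)
        gcongr

lemma tau_le_sigma_rpow (hp : 1 < p) (hpq : p < q) (hτ : 0 < tau n q) :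
    (q + 1) / 2 * tau n q ≤ ((p + 1) / 2 * sigma n p) ^ ((q - 1) / (p - 1)) := by
  set r := (q - 1) / (p - 1)
  have hr : 1 < r := (one_lt_div (by linarith)).2 (by linarith)
  set x := -(((n : ℝ) - 2) / 4) * (p - 1)
  have hσ : (p + 1) / 2 * sigma n p = 1 + x := by
    unfold sigma; field_simp; ring
  have hτ' : (q + 1) / 2 * tau n q = 1 + r * x := by
    have hrp : r * (p - 1) = q - 1 := div_mul_cancel₀ _ (by linarith)
    have hrx : r * x = -(((n : ℝ) - 2) / 4) * (q - 1) := by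
      simp only [x]; rw [← hrp]; ring
    have : q + 1 ≠ 0 := by linarith
    rw [hrx]; unfold tau; field_simp; ring
  have hx : -1 ≤ x := by
    have : 0 < 1 + r * x := by rw [← hτ']; exact mul_pos (by linarith) hτ
    nlinarith
  rw [hσ, hτ']
  exact one_add_mul_self_le_rpow_one_add hx hr.le

lemma exists_reducedSig_pos_of_lt_omegaPQ (hn : 1 ≤ n) (hp : 1 < p) (hpq : p < q)
    (hτ : 0 < tau n q) (hωpq : ω < omegaPQ p q) :
    ∃ w, 0 < w ∧ 0 < reducedSig n ω p q w := by
  set r := (q - 1) / (p - 1)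
  have hr : 1 < r := (one_lt_div (by linarith)).2 (by linarith)
  have : p - 1 ≠ 0 := by linarith
  have : q - 1 ≠ 0 := by linarith
  have : q - p ≠ 0 := by linarith
  have : q + 1 ≠ 0 := by linarith
  have hσ : 0 < sigma n p := hτ.trans (tau_lt_sigma hn (by linarith) hpq)
  set s := (p + 1) / 2 * sigma n p
  set t := (q + 1) / 2 * tau n q
  set K := (p - 1) * (q + 1) / ((p + 1) * (q - 1))
  have hs : 0 < s := mul_pos (by linarith) hσ
  have ht : 0 < t := mul_pos (by linarith) hτ
  have hK : 0 < K :=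
    div_pos (mul_pos (by linarith) (by linarith)) (mul_pos (by linarith) (by linarith))
  have hβ : (r - 1)⁻¹ = (p - 1) / (q - p) := by
    rw [← inv_div, inv_inj]; simp only [r]; field_simp; ring
  have hratio : sigma n p / (tau n q * r) = s / t * K := by
    simp only [r, s, t, K]; field_simp
  have hcoef : (1 - r⁻¹) * sigma n p = s * (2 * (q - p) / ((p + 1) * (q - 1))) := by
    simp only [r, s]; field_simp; ring
  set w := (sigma n p / (tau n q * r)) ^ (r - 1)⁻¹
  refine ⟨w, by positivity, ?_⟩
  have hval : omegaPQ p q ≤ sigma n p * w - tau n q * w ^ r := by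
    rw [mul_sub_mul_rpow_at_critical hσ hτ hr, hcoef, hratio, mul_rpow (by positivity) hK.le]
    have hω0 : 0 ≤ omegaPQ p q :=
      mul_nonneg (div_nonneg (by linarith) (mul_pos (by linarith) (by linarith)).le)
        (rpow_nonneg hK.le _)
    calc omegaPQ p q ≤ s * (s / t) ^ (r - 1)⁻¹ * omegaPQ p q :=
          le_mul_of_one_le_left hω0 (one_le_mul_div_rpow hs ht hr (tau_le_sigma_rpow hp hpq hτ))
      _ = _ := by rw [omegaPQ, hβ]; ring
  unfold reducedSig
  linarith

end Reduced

/-- Theorem 1: for `n ≥ 1`, `1 < p < q` and `0 < ω < ω_{p,q}` there is `B > 0` with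
`Σ < 0` on `(0,B)` and `Σ > 0` on `(B,C)` where either `C = ∞` or `C` is finite with
`Σ < 0` on `(C,∞)`. -/
theorem Sigma_sign_structure (p q ω : ℝ) (n : ℕ) (hn : 1 ≤ n)
    (hp : 1 < p) (hpq : p < q)
    (hω : 0 < ω) (hωpq : ω < omegaPQ p q) :
    ∃ B : ℝ, 0 < B ∧
      (∀ u, 0 < u → u < B → Sig n ω p q u < 0) ∧
      ((∀ u, B < u → 0 < Sig n ω p q u) ∨
        (∃ C : ℝ, B < C ∧
          (∀ u, B < u → u < C → 0 < Sig n ω p q u) ∧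
          (∀ u, C < u → Sig n ω p q u < 0))) := by
  have hp1 : 0 < p - 1 := by linarith
  have hcont : ContinuousWithinAt (reducedSig n ω p q) (Ici 0) 0 :=
    (continuous_reducedSig hp hpq).continuousWithinAt
  have h0 : reducedSig n ω p q 0 < 0 := by rw [reducedSig_zero hp hpq]; linarith
  have hbelow {u b : ℝ} (hu : 0 < u) (hb : 0 < b) (h : u < b ^ (p - 1)⁻¹) :
      u ^ (p - 1) < b :=
    (lt_rpow_inv_iff_of_pos hu.le hb.le hp1).1 h
  have habove {u b : ℝ} (hb : 0 < b) (h : b ^ (p - 1)⁻¹ < u) :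
      0 < u ∧ b < u ^ (p - 1) :=
    have hu := (rpow_pos_of_pos hb _).trans h
    ⟨hu, (rpow_inv_lt_iff_of_pos hb.le hu.le hp1).1 h⟩
  rcases le_or_gt (tau n q) 0 with hτ | hτ
  · obtain ⟨w, hw, hHw⟩ := exists_reducedSig_pos_of_tau_nonpos hn hp hpq hω.le hτ
    obtain ⟨b, hb, hneg, hpos⟩ :=
      (convexOn_reducedSig hp hpq hτ).exists_neg_then_pos hcont h0 hw hHw.le
    refine ⟨b ^ (p - 1)⁻¹, by positivity, fun u hu huB => ?_, Or.inl fun u hBu => ?_⟩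
    · exact Sig_neg_of_reducedSig_neg hp hu (hneg _ (by positivity) (hbelow hu hb huB))
    · obtain ⟨hu, hbu⟩ := habove hb hBu
      exact Sig_pos_of_reducedSig_pos hp hu (hpos _ hbu)
  · obtain ⟨w, hw, hHw⟩ := exists_reducedSig_pos_of_lt_omegaPQ hn hp hpq hτ hωpq
    obtain ⟨b, c, hb, hbc, hneg, hpos, hneg'⟩ :=
      (strictConcaveOn_reducedSig hp hpq hτ).exists_neg_then_pos_then_neg hcont h0 hw hHw
        (eventually_reducedSig_neg hp hpq hω hτ)
    refine ⟨b ^ (p - 1)⁻¹, by positivity, fun u hu huB => ?_, Or.inr ⟨c ^ (p - 1)⁻¹,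
      rpow_lt_rpow hb.le hbc (by positivity), fun u hBu huC => ?_, fun u hCu => ?_⟩⟩
    · exact Sig_neg_of_reducedSig_neg hp hu (hneg _ (by positivity) (hbelow hu hb huB))
    · obtain ⟨hu, hbu⟩ := habove hb hBu
      exact Sig_pos_of_reducedSig_pos hp hu (hpos _ hbu (hbelow hu (hb.trans hbc) huC))
    · obtain ⟨hu, hcu⟩ := habove (hb.trans hbc) hCu
      exact Sig_neg_of_reducedSig_neg hp hu (hneg' _ hcu)
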